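/- arXiv:2003.03087 — 3 statements merged into one kernel-verified Lean document; each statement's English description precedes it below -/
import Mathlib

section
/- Let κ ∈ ℝ, n ≥ 2, R > 0 (with R < π/√κ if κ > 0), λ ∈ ℝ, and α < 0 with α ≥ −2 sn_κ'(R)/sn_κ(R). Suppose F : [0,R] → ℝ is a C² solution of F'' + (n−1)(sn_κ'/sn_κ) F' + (λ − (n−1)/sn_κ²) F = 0 with F(0) = 0, F'(0) = 1, F > 0 on (0,R], F' > 0 on [0,R], and F'(R) = −α F(R). Then F'(r)/F(r) ≥ −α for all r ∈ (0, R]. -/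
/-!
Suppose `v = F' / F` drops below `-α` at some `r`. As `F 0 = 0 < F' 0`, `v` is large near `0`,
so `v` attains its minimum `m < -α` over some `[ε, r]` at a point `r₀ > ε`; there `v' ≤ 0`, i.e.
the Riccati right-hand side `G t := riccati κ ν lam t m` satisfies `G r₀ ≤ 0`. Since
`1 / sn_κ² = ct_κ² + κ` and `ct_κ` decreases with `m / 2 < -α / 2 ≤ ct_κ R`, `G` is nonincreasing
on `(0, R]`. Hence `sn_κ ^ ν * exp (m t) * (F' - m F)`, whose derivative is
`sn_κ ^ ν * exp (m t) * F * G`, decreases from `0` at `r₀`, so `F' R ≤ m F R < -α F R`,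
contradicting the boundary condition.
-/

noncomputable def sn (κ t : ℝ) : ℝ :=
  if 0 < κ then Real.sin (Real.sqrt κ * t) / Real.sqrt κ
  else if κ = 0 then t
  else Real.sinh (Real.sqrt (-κ) * t) / Real.sqrt (-κ)

open Real Set

noncomputable def cs (κ t : ℝ) : ℝ :=
  if 0 < κ then cos (√κ * t)
  else if κ = 0 then 1
  else cosh (√(-κ) * t)

noncomputable def ct (κ t : ℝ) : ℝ := cs κ t / sn κ t

theorem hasDerivAt_sn (κ t : ℝ) : HasDerivAt (sn κ) (cs κ t) t := by
  rcases lt_trichotomy κ 0 with hκ | rfl | hκ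
  · have hs : √(-κ) ≠ 0 := (sqrt_pos.2 (neg_pos.2 hκ)).ne'
    have h := (((hasDerivAt_id' t).const_mul √(-κ)).sinh).div_const √(-κ)
    change HasDerivAt (fun t => sn κ t) _ t
    simp only [sn, cs, if_neg hκ.not_gt, if_neg hκ.ne]
    refine h.congr_deriv ?_
    field_simp
  · change HasDerivAt (fun t => sn 0 t) _ t
    simpa [sn, cs] using hasDerivAt_id' t
  · have hs : √κ ≠ 0 := (sqrt_pos.2 hκ).ne'
    have h := (((hasDerivAt_id' t).const_mul √κ).sin).div_const √κ
    change HasDerivAt (fun t => sn κ t) _ t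
    simp only [sn, cs, if_pos hκ]
    refine h.congr_deriv ?_
    field_simp

theorem continuous_sn (κ : ℝ) : Continuous (sn κ) :=
  continuous_iff_continuousAt.2 fun t => (hasDerivAt_sn κ t).continuousAt

theorem hasDerivAt_cs (κ t : ℝ) : HasDerivAt (cs κ) (-κ * sn κ t) t := by
  rcases lt_trichotomy κ 0 with hκ | rfl | hκ
  · have hs : √(-κ) ≠ 0 := (sqrt_pos.2 (neg_pos.2 hκ)).ne'
    have h := ((hasDerivAt_id' t).const_mul √(-κ)).cosh
    change HasDerivAt (fun t => cs κ t) _ t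
    simp only [sn, cs, if_neg hκ.not_gt, if_neg hκ.ne]
    refine h.congr_deriv ?_
    field_simp
    rw [sq_sqrt (neg_nonneg.2 hκ.le)]
    ring
  · change HasDerivAt (fun t => cs 0 t) _ t
    simpa [sn, cs] using hasDerivAt_const t (1 : ℝ)
  · have hs : √κ ≠ 0 := (sqrt_pos.2 hκ).ne'
    have h := ((hasDerivAt_id' t).const_mul √κ).cos
    change HasDerivAt (fun t => cs κ t) _ t
    simp only [sn, cs, if_pos hκ]
    refine h.congr_deriv ?_
    field_simp
    rw [sq_sqrt hκ.le]
    ring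

theorem cs_sq_add_mul_sn_sq (κ t : ℝ) : cs κ t ^ 2 + κ * sn κ t ^ 2 = 1 := by
  rcases lt_trichotomy κ 0 with hκ | rfl | hκ
  · have hs : √(-κ) ≠ 0 := (sqrt_pos.2 (neg_pos.2 hκ)).ne'
    have hκ0 := hκ.ne
    simp only [sn, cs, if_neg hκ.not_gt, if_neg hκ.ne, div_pow, sq_sqrt (neg_nonneg.2 hκ.le)]
    field_simp
    linear_combination cosh_sq_sub_sinh_sq (√(-κ) * t)
  · simp [sn, cs]
  · have hs : √κ ≠ 0 := (sqrt_pos.2 hκ).ne'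
    simp only [sn, cs, if_pos hκ, div_pow, sq_sqrt hκ.le]
    field_simp
    linear_combination cos_sq_add_sin_sq (√κ * t)

theorem sn_pos {κ R t : ℝ} (hRκ : 0 < κ → R < π / √κ) (ht : 0 < t) (htR : t ≤ R) :
    0 < sn κ t := by
  rcases lt_trichotomy κ 0 with hκ | rfl | hκ
  · simp only [sn, if_neg hκ.not_gt, if_neg hκ.ne]
    have hs : 0 < √(-κ) := sqrt_pos.2 (neg_pos.2 hκ)
    exact div_pos (sinh_pos_iff.2 (by positivity)) hs
  · simpa [sn] using ht
  · simp only [sn, if_pos hκ]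
    have hs : 0 < √κ := sqrt_pos.2 hκ
    refine div_pos (sin_pos_of_pos_of_lt_pi (by positivity) ?_) hs
    calc √κ * t < √κ * (π / √κ) := by gcongr; exact htR.trans_lt (hRκ hκ)
      _ = π := by field_simp

theorem one_div_sn_sq {κ t : ℝ} (h : sn κ t ≠ 0) : 1 / sn κ t ^ 2 = ct κ t ^ 2 + κ := by
  rw [ct, ← cs_sq_add_mul_sn_sq κ t]
  field_simp

theorem hasDerivAt_ct {κ t : ℝ} (h : sn κ t ≠ 0) :
    HasDerivAt (ct κ) (-(1 / sn κ t ^ 2)) t := by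
  refine ((hasDerivAt_cs κ t).div (hasDerivAt_sn κ t) h).congr_deriv ?_
  rw [← cs_sq_add_mul_sn_sq κ t]
  field_simp
  ring

theorem strictAntiOn_ct {κ R : ℝ} (hRκ : 0 < κ → R < π / √κ) : StrictAntiOn (ct κ) (Ioc 0 R) := by
  have hsn : ∀ t ∈ Ioc 0 R, sn κ t ≠ 0 := fun t ht => (sn_pos hRκ ht.1 ht.2).ne'
  refine strictAntiOn_of_deriv_neg (convex_Ioc 0 R)
    (fun t ht => (hasDerivAt_ct (hsn t ht)).continuousAt.continuousWithinAt) fun t ht => ?_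
  rw [interior_Ioc] at ht
  rw [(hasDerivAt_ct (hsn t (Ioo_subset_Ioc_self ht))).deriv, neg_neg_iff_pos]
  exact div_pos one_pos (pow_pos (sn_pos hRκ ht.1 ht.2.le) 2)

theorem HasDerivAt.nonpos_of_isMinOn_Icc {f : ℝ → ℝ} {f' a b : ℝ} (hf : HasDerivAt f f' b)
    (hab : a < b) (hmin : IsMinOn f (Icc a b) b) : f' ≤ 0 := by
  have hseg : segment ℝ b (b + (a - b)) ⊆ Icc a b := by
    rw [add_sub_cancel, segment_symm, segment_eq_Icc hab.le]
  have : 0 ≤ (a - b) * f' := by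
    simpa using hmin.localize.hasFDerivWithinAt_nonneg hf.hasFDerivAt.hasFDerivWithinAt
      (mem_posTangentConeAt_of_segment_subset hseg)
  nlinarith

theorem continuousOn_deriv_of_contDiffOn_Icc {f : ℝ → ℝ} {a b : ℝ} (hab : a < b)
    (hf : ContDiffOn ℝ 1 f (Icc a b)) (hd : ∀ x ∈ Icc a b, DifferentiableAt ℝ f x) :
    ContinuousOn (deriv f) (Icc a b) :=
  (hf.continuousOn_derivWithin (uniqueDiffOn_Icc hab) le_rfl).congr fun x hx =>
    ((hd x hx).derivWithin (uniqueDiffOn_Icc hab x hx)).symm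

theorem exists_mem_Ioo_mul_lt_deriv {F : ℝ → ℝ} {a b : ℝ} (hab : a < b)
    (hF : ContinuousOn F (Icc a b)) (hF' : ContinuousOn (deriv F) (Icc a b)) (hFa : F a = 0)
    (hF'a : 0 < deriv F a) (c : ℝ) : ∃ x ∈ Ioo a b, c * F x < deriv F x := by
  have hg : ContinuousWithinAt (fun x => deriv F x - c * F x) (Ioo a b) a :=
    ((hF'.sub (hF.const_smul c)) a (left_mem_Icc.2 hab.le)).mono Ioo_subset_Icc_self
  have := left_nhdsWithin_Ioo_neBot hab
  obtain ⟨x, hx, hpos⟩ := ((eventually_mem_nhdsWithin (a := a) (s := Ioo a b)).and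
    (hg.eventually (eventually_gt_nhds (by simpa [hFa] using hF'a)))).exists
  exact ⟨x, hx, by linarith⟩

structure IsRadialSolution (κ ν lam R : ℝ) (F : ℝ → ℝ) : Prop where
  contDiffOn : ContDiffOn ℝ 2 F (Icc 0 R)
  ode : ∀ r ∈ Ioc (0 : ℝ) R, deriv (deriv F) r + ν * (deriv (sn κ) r / sn κ r) * deriv F r
    + (lam - ν / sn κ r ^ 2) * F r = 0

/-- `v = F' / F` solves `v' = riccati κ ν lam t v` whenever `F` is a radial solution. -/
noncomputable def riccati (κ ν lam t v : ℝ) : ℝ := ν / sn κ t ^ 2 - ν * ct κ t * v - v ^ 2 - lam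

/-- Up to the factor `-sn κ t ^ ν`, the Wronskian of `F` and `t ↦ exp (m * t)`. -/
noncomputable def weightedWronskian (κ ν m : ℝ) (F : ℝ → ℝ) (t : ℝ) : ℝ :=
  sn κ t ^ ν * exp (m * t) * (deriv F t - m * F t)

theorem antitoneOn_riccati {κ ν lam R m : ℝ} (hRκ : 0 < κ → R < π / √κ) (hν : 0 ≤ ν)
    (hm : m ≤ 2 * ct κ R) : AntitoneOn (fun t => riccati κ ν lam t m) (Ioc 0 R) := by
  intro a ha b hb hab
  have hR : R ∈ Ioc 0 R := ⟨ha.1.trans_le ha.2, le_rfl⟩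
  have hba : ct κ b ≤ ct κ a := (strictAntiOn_ct hRκ).antitoneOn ha hb hab
  have hRb : ct κ R ≤ ct κ b := (strictAntiOn_ct hRκ).antitoneOn hb hR hb.2
  have key : ct κ b ^ 2 - ct κ b * m ≤ ct κ a ^ 2 - ct κ a * m := by nlinarith
  simp only [riccati, div_eq_mul_one_div ν, one_div_sn_sq (sn_pos hRκ ha.1 ha.2).ne',
    one_div_sn_sq (sn_pos hRκ hb.1 hb.2).ne']
  nlinarith [mul_le_mul_of_nonneg_left key hν]

namespace IsRadialSolution

variable {κ ν lam R : ℝ} {F : ℝ → ℝ}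

theorem hasDerivAt (hF : IsRadialSolution κ ν lam R F) {t : ℝ} (ht : t ∈ Ioo 0 R) :
    HasDerivAt F (deriv F t) t :=
  ((hF.contDiffOn.differentiableOn two_ne_zero).differentiableAt
    (Icc_mem_nhds ht.1 ht.2)).hasDerivAt

theorem hasDerivAt_deriv (hF : IsRadialSolution κ ν lam R F) {t : ℝ} (ht : t ∈ Ioo 0 R) :
    HasDerivAt (deriv F) (deriv (deriv F) t) t :=
  (((hF.contDiffOn.mono Ioo_subset_Icc_self).deriv_of_isOpen isOpen_Ioo
    (by norm_num)).differentiableOn one_ne_zero |>.differentiableAt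
    (isOpen_Ioo.mem_nhds ht)).hasDerivAt

theorem hasDerivAt_weightedWronskian (hF : IsRadialSolution κ ν lam R F)
    (hRκ : 0 < κ → R < π / √κ) (m : ℝ) {t : ℝ} (ht : t ∈ Ioo 0 R) :
    HasDerivAt (weightedWronskian κ ν m F)
      (sn κ t ^ ν * exp (m * t) * F t * riccati κ ν lam t m) t := by
  have hs : 0 < sn κ t := sn_pos hRκ ht.1 ht.2.le
  have hode := hF.ode t (Ioo_subset_Ioc_self ht)
  rw [(hasDerivAt_sn κ t).deriv] at hode
  have hw := (hasDerivAt_sn κ t).rpow_const (p := ν) (Or.inl hs.ne')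
  have he := ((hasDerivAt_id' t).const_mul m).exp
  refine ((hw.mul he).mul ((hF.hasDerivAt_deriv ht).sub
    ((hF.hasDerivAt ht).const_mul m))).congr_deriv ?_
  simp only [Pi.sub_apply, Pi.mul_apply, riccati, ct, rpow_sub_one hs.ne']
  linear_combination (sn κ t ^ ν * exp (m * t)) * hode

theorem riccati_nonpos_of_isMinOn (hF : IsRadialSolution κ ν lam R F)
    (hRκ : 0 < κ → R < π / √κ) (hpos : ∀ t ∈ Ioc 0 R, 0 < F t) {a b : ℝ} (ha : 0 < a)
    (hab : a < b) (hbR : b < R) (hmin : IsMinOn (fun t => deriv F t / F t) (Icc a b) b) :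
    riccati κ ν lam b (deriv F b / F b) ≤ 0 := by
  set m := deriv F b / F b
  have hFb : 0 < F b := hpos b ⟨ha.trans hab, hbR.le⟩
  -- the weighted Wronskian equals `sn ^ ν * exp (m t) * F * (v - m)`
  have hWmin : IsMinOn (weightedWronskian κ ν m F) (Icc a b) b := by
    intro t ht
    have hFt : 0 < F t := hpos t ⟨ha.trans_le ht.1, ht.2.trans hbR.le⟩
    have hvt : m ≤ deriv F t / F t := hmin ht
    rw [le_div_iff₀ hFt] at hvt
    have hs : 0 < sn κ t := sn_pos hRκ (ha.trans_le ht.1) (ht.2.trans hbR.le)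
    simp only [mem_ofPred_eq, weightedWronskian, m, div_mul_cancel₀ _ hFb.ne', sub_self, mul_zero]
    exact mul_nonneg (by positivity) (by linarith)
  have hs : 0 < sn κ b := sn_pos hRκ (ha.trans hab) hbR.le
  exact nonpos_of_mul_nonpos_right
    ((hF.hasDerivAt_weightedWronskian hRκ m ⟨ha.trans hab, hbR⟩).nonpos_of_isMinOn_Icc hab hWmin)
    (by positivity)

theorem exists_riccati_nonpos (hF : IsRadialSolution κ ν lam R F)
    (hRκ : 0 < κ → R < π / √κ) (hd : ContinuousOn (deriv F) (Icc 0 R))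
    (hpos : ∀ t ∈ Ioc 0 R, 0 < F t) (hF0 : F 0 = 0) (hF'0 : 0 < deriv F 0) {r : ℝ}
    (hr : r ∈ Ioo 0 R) : ∃ r₀ ∈ Ioc 0 r,
      deriv F r₀ / F r₀ ≤ deriv F r / F r ∧ riccati κ ν lam r₀ (deriv F r₀ / F r₀) ≤ 0 := by
  have hrR : Icc 0 r ⊆ Icc 0 R := Icc_subset_Icc_right hr.2.le
  obtain ⟨ε, hε, hεv⟩ := exists_mem_Ioo_mul_lt_deriv hr.1 (hF.contDiffOn.continuousOn.mono hrR)
    (hd.mono hrR) hF0 hF'0 (deriv F r / F r)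
  have hIcc : Icc ε r ⊆ Ioc 0 R := fun t ht => ⟨hε.1.trans_le ht.1, ht.2.trans hr.2.le⟩
  obtain ⟨r₀, hr₀, hmin⟩ := isCompact_Icc.exists_isMinOn (nonempty_Icc.2 hε.2.le)
    ((hd.mono (hIcc.trans Ioc_subset_Icc_self)).div (hF.contDiffOn.continuousOn.mono
      (hIcc.trans Ioc_subset_Icc_self)) fun t ht => (hpos t (hIcc ht)).ne')
  have hvr₀ : deriv F r₀ / F r₀ ≤ deriv F r / F r := hmin (right_mem_Icc.2 hε.2.le)
  have hεr₀ : ε < r₀ := by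
    refine hr₀.1.lt_of_ne fun hεr₀ => ?_
    rw [← hεr₀, div_le_iff₀ (hpos ε (hIcc (left_mem_Icc.2 hε.2.le)))] at hvr₀
    linarith
  exact ⟨r₀, ⟨hε.1.trans hεr₀, hr₀.2⟩, hvr₀, hF.riccati_nonpos_of_isMinOn hRκ hpos hε.1 hεr₀
    (hr₀.2.trans_lt hr.2) (hmin.on_subset (Icc_subset_Icc_right hr₀.2))⟩

theorem deriv_le_mul_of_riccati_nonpos (hF : IsRadialSolution κ ν lam R F)
    (hRκ : 0 < κ → R < π / √κ) (hν : 0 ≤ ν) (hd : ContinuousOn (deriv F) (Icc 0 R))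
    {r m : ℝ} (hr : r ∈ Ioc 0 R) (hm : m ≤ 2 * ct κ R) (hrm : deriv F r = m * F r)
    (hG : riccati κ ν lam r m ≤ 0) (hpos : ∀ t ∈ Ioc 0 R, 0 < F t) :
    deriv F R ≤ m * F R := by
  have hsub : Icc r R ⊆ Icc 0 R := Icc_subset_Icc_left hr.1.le
  have hcont : ContinuousOn (weightedWronskian κ ν m F) (Icc r R) :=
    (((continuous_sn κ).continuousOn.rpow_const fun _ _ => Or.inr hν).mul
      (continuous_exp.comp (continuous_const_mul m)).continuousOn).mul
      ((hd.sub (hF.contDiffOn.continuousOn.const_smul m)).mono hsub)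
  have hanti : AntitoneOn (weightedWronskian κ ν m F) (Icc r R) := by
    refine antitoneOn_of_hasDerivWithinAt_nonpos (convex_Icc r R) hcont
      (f' := fun x => sn κ x ^ ν * exp (m * x) * F x * riccati κ ν lam x m) (fun x hx => ?_)
      fun x hx => ?_
    · rw [interior_Icc] at hx
      exact (hF.hasDerivAt_weightedWronskian hRκ m ⟨hr.1.trans hx.1, hx.2⟩).hasDerivWithinAt
    · rw [interior_Icc] at hx
      have hx' : x ∈ Ioc 0 R := ⟨hr.1.trans hx.1, hx.2.le⟩
      have hFx := hpos x hx'
      have hsx := sn_pos hRκ hx'.1 hx'.2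
      exact mul_nonpos_of_nonneg_of_nonpos (by positivity)
        ((antitoneOn_riccati hRκ hν hm hr hx' hx.1.le).trans hG)
  have hWR := hanti (left_mem_Icc.2 hr.2) (right_mem_Icc.2 hr.2) hr.2
  have hsR := sn_pos hRκ (hr.1.trans_le hr.2) le_rfl
  simp only [weightedWronskian, hrm, sub_self, mul_zero] at hWR
  linarith [nonpos_of_mul_nonpos_right hWR (by positivity)]

end IsRadialSolution

theorem deriv_div_ge_of_robin_radial_general (κ : ℝ) (n : ℕ) (hn : 2 ≤ n) (R : ℝ) (hR : 0 < R)
    (hRκ : 0 < κ → R < Real.pi / Real.sqrt κ) (lam α : ℝ)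
    (hα2 : -2 * deriv (sn κ) R / sn κ R ≤ α)
    (F : ℝ → ℝ) (hF : ContDiffOn ℝ 2 F (Set.Icc 0 R))
    (hode : ∀ r ∈ Set.Ioc (0 : ℝ) R,
      deriv (deriv F) r + ((n : ℝ) - 1) * (deriv (sn κ) r / sn κ r) * deriv F r
        + (lam - ((n : ℝ) - 1) / (sn κ r) ^ 2) * F r = 0)
    (hF0 : F 0 = 0)
    (hFpos : ∀ r ∈ Set.Ioc (0 : ℝ) R, 0 < F r)
    (hF'pos : ∀ r ∈ Set.Icc (0 : ℝ) R, 0 < deriv F r)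
    (hbc : deriv F R = -α * F R) :
    ∀ r ∈ Set.Ioc (0 : ℝ) R, -α ≤ deriv F r / F r := by
  have hsol : IsRadialSolution κ ((n : ℝ) - 1) lam R F := ⟨hF, hode⟩
  have hν : (0 : ℝ) ≤ (n : ℝ) - 1 := by
    have : (2 : ℝ) ≤ n := by exact_mod_cast hn
    linarith
  have hd : ContinuousOn (deriv F) (Icc 0 R) := continuousOn_deriv_of_contDiffOn_Icc hR
    (hF.of_le one_le_two) fun t ht => differentiableAt_of_deriv_ne_zero (hF'pos t ht).ne'
  have hαR : -α ≤ 2 * ct κ R := by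
    rw [(hasDerivAt_sn κ R).deriv, neg_mul, neg_div] at hα2
    rw [ct, mul_div_assoc']
    linarith
  intro r hr
  by_contra! hlt
  rcases hr.2.eq_or_lt with rfl | hrR
  · rw [hbc, mul_div_cancel_right₀ _ (hFpos r hr).ne'] at hlt
    exact lt_irrefl _ hlt
  obtain ⟨r₀, hr₀, hvr₀, hG⟩ := hsol.exists_riccati_nonpos hRκ hd hFpos hF0
    (hF'pos 0 (left_mem_Icc.2 hR.le)) ⟨hr.1, hrR⟩
  have hm : deriv F r₀ / F r₀ < -α := hvr₀.trans_lt hlt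
  have hFr₀ : 0 < F r₀ := hFpos r₀ ⟨hr₀.1, hr₀.2.trans hr.2⟩
  have hRle := hsol.deriv_le_mul_of_riccati_nonpos hRκ hν hd ⟨hr₀.1, hr₀.2.trans hr.2⟩
    (hm.le.trans hαR) (div_mul_cancel₀ _ hFr₀.ne').symm hG hFpos
  have := mul_lt_mul_of_pos_right hm (hFpos R ⟨hR, le_rfl⟩)
  linarith

/-- Proposition 2.1(2): for −2 sn_κ'(R)/sn_κ(R) ≤ α < 0, the radial part F of the
second Robin eigenfunction satisfies F'/F ≥ −α on (0, R]. -/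
theorem deriv_div_ge_of_robin_radial (κ : ℝ) (n : ℕ) (hn : 2 ≤ n) (R : ℝ) (hR : 0 < R)
    (hRκ : 0 < κ → R < Real.pi / Real.sqrt κ) (lam α : ℝ) (hα : α < 0)
    (hα2 : -2 * deriv (sn κ) R / sn κ R ≤ α)
    (F : ℝ → ℝ) (hF : ContDiffOn ℝ 2 F (Set.Icc 0 R))
    (hode : ∀ r ∈ Set.Ioc (0 : ℝ) R,
      deriv (deriv F) r + ((n : ℝ) - 1) * (deriv (sn κ) r / sn κ r) * deriv F r
        + (lam - ((n : ℝ) - 1) / (sn κ r) ^ 2) * F r = 0)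
    (hF0 : F 0 = 0) (hF'0 : deriv F 0 = 1)
    (hFpos : ∀ r ∈ Set.Ioc (0 : ℝ) R, 0 < F r)
    (hF'pos : ∀ r ∈ Set.Icc (0 : ℝ) R, 0 < deriv F r)
    (hbc : deriv F R = -α * F R) :
    ∀ r ∈ Set.Ioc (0 : ℝ) R, -α ≤ deriv F r / F r :=
  deriv_div_ge_of_robin_radial_general κ n hn R hR hRκ lam α hα2 F hF hode hF0 hFpos hF'pos hbc
end

section
/- Let κ ≤ 0, n ≥ 2, λ ≥ 0, α ∈ ℝ, and let F be C² on an interval I ⊂ (0,∞) with F > 0, F' > 0 there, satisfying F'' + (n−1)(sn_κ'/sn_κ)F' + (λ − (n−1)/sn_κ²)F = 0. Then the quantity I(r) := 2F'F'' − 2(n−1)(sn_κ'/sn_κ³)F² + (2(n−1)/sn_κ²)FF' satisfies I(r) = −(2(n−1)/sn_κ³)(sn_κ² sn_κ'(F')² − 2 sn_κ FF' + sn_κ' F²) − 2λFF' ≤ −2λFF' on I. -/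
/-!
Solving the ODE for `F''` turns `I` into the stated expression by pure algebra. For the bound,
`sn_κ' ≥ 1` gives `sn_κ² sn_κ' F'² - 2 sn_κ F F' + sn_κ' F² ≥ (sn_κ F' - F)² ≥ 0`, and this
quadratic form enters `I` with the nonpositive coefficient `-2(n-1)/sn_κ³`.
-/

open Real

lemma sn_zero : sn 0 = id := by
  funext t
  simp [sn]

lemma sn_of_neg {κ : ℝ} (hκ : κ < 0) : sn κ = fun t => sinh (√(-κ) * t) / √(-κ) := by
  funext t
  simp [sn, hκ.not_gt, hκ.ne]

lemma sn_pos_s10 {κ r : ℝ} (hκ : κ ≤ 0) (hr : 0 < r) : 0 < sn κ r := by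
  rcases hκ.eq_or_lt with rfl | hκ
  · simpa [sn_zero] using hr
  · rw [sn_of_neg hκ]
    have hc : 0 < √(-κ) := sqrt_pos.mpr (neg_pos.mpr hκ)
    exact div_pos (sinh_pos_iff.mpr (mul_pos hc hr)) hc

lemma hasDerivAt_sn_of_neg {κ : ℝ} (hκ : κ < 0) (r : ℝ) :
    HasDerivAt (sn κ) (cosh (√(-κ) * r)) r := by
  have hc : √(-κ) ≠ 0 := (sqrt_pos.mpr (neg_pos.mpr hκ)).ne'
  rw [sn_of_neg hκ]
  have h := (((hasDerivAt_id' r).const_mul √(-κ)).sinh).div_const √(-κ)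
  rwa [mul_one, mul_div_assoc, div_self hc, mul_one] at h

lemma one_le_deriv_sn {κ : ℝ} (hκ : κ ≤ 0) (r : ℝ) : 1 ≤ deriv (sn κ) r := by
  rcases hκ.eq_or_lt with rfl | hκ
  · simp [sn_zero]
  · rw [(hasDerivAt_sn_of_neg hκ r).deriv]
    exact one_le_cosh _

section Algebra

variable {S S' f f' f'' m lam : ℝ}

lemma I_eq_of_ode (hS : S ≠ 0)
    (hode : f'' + m * (S' / S) * f' + (lam - m / S ^ 2) * f = 0) :
    2 * f' * f'' - 2 * m * (S' / S ^ 3) * f ^ 2 + (2 * m / S ^ 2) * f * f'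
      = -(2 * m / S ^ 3) * (S ^ 2 * S' * f' ^ 2 - 2 * S * f * f' + S' * f ^ 2)
        - 2 * lam * f * f' := by
  have hf'' : f'' = -(m * (S' / S) * f' + (lam - m / S ^ 2) * f) := by linarith
  rw [hf'']
  field_simp
  ring

lemma quadForm_nonneg (hS' : 1 ≤ S') : 0 ≤ S ^ 2 * S' * f' ^ 2 - 2 * S * f * f' + S' * f ^ 2 :=
  calc 0 ≤ (S * f' - f) ^ 2 := sq_nonneg _
    _ ≤ S ^ 2 * S' * f' ^ 2 - 2 * S * f * f' + S' * f ^ 2 := by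
      nlinarith [mul_nonneg (sub_nonneg.mpr hS') (sq_nonneg (S * f')),
        mul_nonneg (sub_nonneg.mpr hS') (sq_nonneg f)]

end Algebra

theorem I_identity_and_bound_general (κ : ℝ) (hκ : κ ≤ 0) (n : ℕ) (hn : 2 ≤ n)
    (lam : ℝ)
    (s : Set ℝ) (hs : s ⊆ Set.Ioi 0) (F : ℝ → ℝ)
    (hode : ∀ r ∈ s,
      deriv (deriv F) r + ((n : ℝ) - 1) * (deriv (sn κ) r / sn κ r) * deriv F r
        + (lam - ((n : ℝ) - 1) / (sn κ r) ^ 2) * F r = 0) :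
    ∀ r ∈ s,
      (2 * deriv F r * deriv (deriv F) r
          - 2 * ((n : ℝ) - 1) * (deriv (sn κ) r / (sn κ r) ^ 3) * (F r) ^ 2
          + (2 * ((n : ℝ) - 1) / (sn κ r) ^ 2) * F r * deriv F r
        = -(2 * ((n : ℝ) - 1) / (sn κ r) ^ 3) *
            ((sn κ r) ^ 2 * deriv (sn κ) r * (deriv F r) ^ 2
              - 2 * sn κ r * F r * deriv F r + deriv (sn κ) r * (F r) ^ 2)
          - 2 * lam * F r * deriv F r) ∧
      (2 * deriv F r * deriv (deriv F) r
          - 2 * ((n : ℝ) - 1) * (deriv (sn κ) r / (sn κ r) ^ 3) * (F r) ^ 2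
          + (2 * ((n : ℝ) - 1) / (sn κ r) ^ 2) * F r * deriv F r
        ≤ -2 * lam * F r * deriv F r) := by
  intro r hr
  have hsn : 0 < sn κ r := sn_pos_s10 hκ (hs hr)
  have hI := I_eq_of_ode hsn.ne' (hode r hr)
  refine ⟨hI, ?_⟩
  have hm : (0 : ℝ) ≤ (n : ℝ) - 1 := by
    have : (2 : ℝ) ≤ n := by exact_mod_cast hn
    linarith
  have hcoef : 0 ≤ 2 * ((n : ℝ) - 1) / sn κ r ^ 3 := by positivity
  have hQ := quadForm_nonneg (S := sn κ r) (f := F r) (f' := deriv F r) (one_le_deriv_sn hκ r)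
  rw [hI]
  linarith [mul_nonneg hcoef hQ]

/-- The identity and estimate for the quantity I(r) appearing in the proof
that H is decreasing on (0, R]. -/
theorem I_identity_and_bound (κ : ℝ) (hκ : κ ≤ 0) (n : ℕ) (hn : 2 ≤ n)
    (lam α : ℝ) (hlam : 0 ≤ lam)
    (s : Set ℝ) (hs : s ⊆ Set.Ioi 0) (F : ℝ → ℝ) (hF : ContDiffOn ℝ 2 F s)
    (hFpos : ∀ r ∈ s, 0 < F r) (hF' : ∀ r ∈ s, 0 < deriv F r)
    (hode : ∀ r ∈ s,
      deriv (deriv F) r + ((n : ℝ) - 1) * (deriv (sn κ) r / sn κ r) * deriv F r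
        + (lam - ((n : ℝ) - 1) / (sn κ r) ^ 2) * F r = 0) :
    ∀ r ∈ s,
      (2 * deriv F r * deriv (deriv F) r
          - 2 * ((n : ℝ) - 1) * (deriv (sn κ) r / (sn κ r) ^ 3) * (F r) ^ 2
          + (2 * ((n : ℝ) - 1) / (sn κ r) ^ 2) * F r * deriv F r
        = -(2 * ((n : ℝ) - 1) / (sn κ r) ^ 3) *
            ((sn κ r) ^ 2 * deriv (sn κ) r * (deriv F r) ^ 2
              - 2 * sn κ r * F r * deriv F r + deriv (sn κ) r * (F r) ^ 2)
          - 2 * lam * F r * deriv F r) ∧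
      (2 * deriv F r * deriv (deriv F) r
          - 2 * ((n : ℝ) - 1) * (deriv (sn κ) r / (sn κ r) ^ 3) * (F r) ^ 2
          + (2 * ((n : ℝ) - 1) / (sn κ r) ^ 2) * F r * deriv F r
        ≤ -2 * lam * F r * deriv F r) :=
  I_identity_and_bound_general κ hκ n hn lam s hs F hode
end

section
/- Let K be a nonempty compact convex subset of ℝⁿ homeomorphic to a closed ball, let μ be a finite positive measure supported in K, let F : [0,∞) → [0,∞) be continuous with F(0) = 0 and F > 0 on (0,∞), and let u : K → (0,∞) be continuous. Then there exists a point p ∈ K such that ∫_K F(|x − p|) (x − p)/|x − p| · u(x) dμ(x) = 0 (with the integrand defined to be 0 where x = p). -/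
/-!
The field `X` is minus the gradient of `Φ p = ∫ G ‖x - p‖ * u x ∂μ`, where `G` is a primitive
of `F`, so no fixed point theorem is needed. At a minimiser `p` of `Φ` on the convex set `K` the
first-order condition gives `⟪X p, x - p⟫ ≤ 0` for `x ∈ K`. The integrand of `X p` at `x` is a
nonnegative multiple of `x - p`, so integrating against `X p` gives `‖X p‖² ≤ 0`.
-/

open MeasureTheory Filter Asymptotics
open scoped RealInnerProductSpace Topology

variable {E : Type*} [NormedAddCommGroup E] [InnerProductSpace ℝ E]

theorem hasFDerivAt_norm {v : E} (hv : v ≠ 0) :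
    HasFDerivAt (‖·‖) (‖v‖⁻¹ • innerSL ℝ v) v := by
  have hsq : HasFDerivAt (fun w : E => √(‖w‖ ^ 2)) ((1 / (2 * √(‖v‖ ^ 2))) • 2 • innerSL ℝ v) v :=
    (hasStrictFDerivAt_norm_sq v).hasFDerivAt.sqrt (by positivity)
  simp only [Real.sqrt_sq (norm_nonneg _)] at hsq
  convert hsq using 1
  ext w
  simp only [smul_apply, innerSL_apply_apply, smul_eq_mul, nsmul_eq_mul, Nat.cast_ofNat]
  field_simp

-- At `v = 0` this is `0` whatever `g 0` is, since `‖0‖⁻¹ = 0`.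
noncomputable def radialField (g : ℝ → ℝ) (v : E) : E := (g ‖v‖ / ‖v‖) • v

theorem norm_radialField_le (g : ℝ → ℝ) (v : E) : ‖radialField g v‖ ≤ |g ‖v‖| := by
  rcases eq_or_ne v 0 with rfl | hv
  · simp [radialField]
  · rw [radialField, norm_smul, Real.norm_eq_abs, abs_div, abs_norm,
      div_mul_cancel₀ _ (norm_ne_zero_iff.mpr hv)]

theorem continuous_radialField {g : ℝ → ℝ} (hg : Continuous g) (hg0 : g 0 = 0) :
    Continuous (radialField g : E → E) := by
  refine continuous_iff_continuousAt.2 fun v => ?_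
  rcases eq_or_ne v 0 with rfl | hv
  · have hlim : Tendsto (fun w : E => |g ‖w‖|) (𝓝 0) (𝓝 0) := by
      simpa [hg0] using (hg.comp continuous_norm).abs.tendsto (0 : E)
    simpa [ContinuousAt, radialField] using
      squeeze_zero_norm (norm_radialField_le g) hlim
  · exact ((hg.continuousAt.comp continuous_norm.continuousAt).div continuous_norm.continuousAt
      (norm_ne_zero_iff.mpr hv)).smul continuousAt_id

theorem hasFDerivAt_comp_norm {f g : ℝ → ℝ} (hf : ∀ t, HasDerivAt f (g t) t) (hg0 : g 0 = 0)
    (v : E) : HasFDerivAt (fun w => f ‖w‖) (innerSL ℝ (radialField g v)) v := by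
  rcases eq_or_ne v 0 with rfl | hv
  · have h0 := hasDerivAt_iff_isLittleO_nhds_zero.1 (hf 0)
    simp only [hg0, smul_zero, sub_zero, zero_add] at h0
    simpa [hasFDerivAt_iff_isLittleO_nhds_zero, radialField, Function.comp_def] using
      isLittleO_norm_right.1 (h0.comp_tendsto (continuous_norm.tendsto' (0 : E) 0 norm_zero))
  · refine ((hf ‖v‖).comp_hasFDerivAt v (hasFDerivAt_norm hv)).congr_fderiv ?_
    rw [radialField, map_smul, smul_smul, div_eq_mul_inv]

theorem Continuous.integrable_of_ae_mem_isCompact {α H : Type*} [TopologicalSpace α] [T2Space α]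
    [MeasurableSpace α] [OpensMeasurableSpace α] {μ : Measure α} [IsFiniteMeasureOnCompacts μ]
    [NormedAddCommGroup H] {K : Set α} {g : α → H} (hg : Continuous g) (hK : IsCompact K)
    (hμK : ∀ᵐ x ∂μ, x ∈ K) : Integrable g μ := by
  rw [← Measure.restrict_eq_self_of_ae_mem hμK]
  exact hg.continuousOn.integrableOn_compact hK

theorem integral_eq_zero_of_inner_integral_nonpos [CompleteSpace E] {α : Type*}
    [MeasurableSpace α] {μ : Measure α} {V : α → E} (hV : Integrable V μ)
    (h : ∀ᵐ x ∂μ, ⟪∫ y, V y ∂μ, V x⟫ ≤ 0) : ∫ x, V x ∂μ = 0 := by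
  rw [← real_inner_self_nonpos, ← integral_inner hV]
  exact integral_nonpos_of_ae h

theorem IsMinOn.inner_sub_nonneg {Φ : E → ℝ} {K : Set E} {p q w : E} (hmin : IsMinOn Φ K p)
    (hK : Convex ℝ K) (hp : p ∈ K) (hq : q ∈ K) (hΦ : HasFDerivAt Φ (innerSL ℝ w) p) :
    0 ≤ ⟪w, q - p⟫ :=
  hmin.localize.hasFDerivWithinAt_nonneg hΦ.hasFDerivWithinAt
    (sub_mem_posTangentConeAt_of_segment_subset (hK.segment_subset hp hq))

theorem hasFDerivAt_integral_comp_norm_sub [ProperSpace E] [MeasurableSpace E]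
    [OpensMeasurableSpace E] {μ : Measure E} [IsFiniteMeasure μ]
    {K : Set E} {f g : ℝ → ℝ} {u : E → ℝ} (hf : ∀ t, HasDerivAt f (g t) t) (hg : Continuous g)
    (hg0 : g 0 = 0) (hu : Continuous u) (hK : IsCompact K) (hμK : ∀ᵐ x ∂μ, x ∈ K) (p : E) :
    HasFDerivAt (fun q => ∫ x, f ‖x - q‖ * u x ∂μ)
      (innerSL ℝ (-∫ x, u x • radialField g (x - p) ∂μ)) p := by
  have hfc : Continuous f := continuous_iff_continuousAt.2 fun t => (hf t).continuousAt
  have hV : Continuous fun z : E × E => u z.1 • radialField g (z.1 - z.2) :=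
    (hu.comp continuous_fst).smul ((continuous_radialField hg hg0).comp
      (continuous_fst.sub continuous_snd))
  have hVp : Continuous fun x => u x • radialField g (x - p) :=
    hV.comp (continuous_id.prodMk continuous_const)
  obtain ⟨C, hC⟩ := (hK.prod (isCompact_closedBall p 1)).exists_bound_of_continuousOn
    hV.continuousOn
  have hderiv (x q : E) : HasFDerivAt (fun y => f ‖x - y‖ * u x)
      (innerSL ℝ (-(u x • radialField g (x - q)))) q := by
    refine (((hasFDerivAt_comp_norm hf hg0 (x - q)).comp q
      ((hasFDerivAt_id q).const_sub x)).mul_const (u x)).congr_fderiv ?_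
    ext w
    simp only [ContinuousLinearMap.comp_apply, smul_apply, innerSL_apply_apply, inner_neg_left,
      inner_smul_left, neg_apply, ContinuousLinearMap.id_apply, inner_neg_right,
      smul_eq_mul, RCLike.conj_to_real]
    ring
  have hswap : ∫ x, innerSL ℝ (-(u x • radialField g (x - p))) ∂μ =
      innerSL ℝ (-∫ x, u x • radialField g (x - p) ∂μ) := by
    rw [← integral_neg]
    exact (innerSL ℝ).integral_comp_comm (hVp.neg.integrable_of_ae_mem_isCompact hK hμK)
  rw [← hswap]
  refine hasFDerivAt_integral_of_dominated_of_fderiv_le (Metric.ball_mem_nhds p one_pos)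
    (Eventually.of_forall fun q => ?_) ?_ ?_ (bound := fun _ => C) ?_ (integrable_const C)
    (Eventually.of_forall fun x q _ => hderiv x q)
  · exact (by fun_prop : Continuous fun x => f ‖x - q‖ * u x).aestronglyMeasurable
  · exact (by fun_prop : Continuous fun x => f ‖x - p‖ * u x).integrable_of_ae_mem_isCompact
      hK hμK
  · exact ((innerSL ℝ).continuous.comp hVp.neg).aestronglyMeasurable
  · filter_upwards [hμK] with x hx q hq
    rw [innerSL_apply_norm, norm_neg]
    exact hC (x, q) ⟨hx, Metric.ball_subset_closedBall hq⟩

theorem center_of_mass_exists_general (n : ℕ)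
    (K : Set (EuclideanSpace ℝ (Fin n)))
    (hKcpt : IsCompact K) (hKconv : Convex ℝ K) (hKne : K.Nonempty)
    (μ : Measure (EuclideanSpace ℝ (Fin n))) [IsFiniteMeasure μ] (hμK : μ Kᶜ = 0)
    (F : ℝ → ℝ) (hFc : Continuous F) (hF0 : F 0 = 0)
    (hFnn : ∀ t ≥ (0 : ℝ), 0 ≤ F t)
    (u : EuclideanSpace ℝ (Fin n) → ℝ) (hu : Continuous u)
    (hupos : ∀ x ∈ K, 0 < u x) :
    ∃ p ∈ K, ∫ x, (F ‖x - p‖ / ‖x - p‖ * u x) • (x - p) ∂μ = 0 := by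
  have hK_ae : ∀ᵐ x ∂μ, x ∈ K := mem_ae_iff.2 hμK
  have hΦ := hasFDerivAt_integral_comp_norm_sub (μ := μ) (u := u)
    (fun t => (hFc.integral_hasStrictDerivAt 0 t).hasDerivAt) hFc hF0 hu hKcpt hK_ae
  obtain ⟨p, hpK, hmin⟩ := hKcpt.exists_isMinOn hKne
    (continuous_iff_continuousAt.2 fun q => (hΦ q).continuousAt).continuousOn
  refine ⟨p, hpK, ?_⟩
  have hV : (fun x => (F ‖x - p‖ / ‖x - p‖ * u x) • (x - p)) =
      fun x => u x • radialField F (x - p) :=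
    funext fun x => by rw [radialField, smul_smul, mul_comm]
  rw [hV]
  refine integral_eq_zero_of_inner_integral_nonpos
    ((hu.smul ((continuous_radialField hFc hF0).comp (continuous_id.sub continuous_const)))
      |>.integrable_of_ae_mem_isCompact hKcpt hK_ae) ?_
  filter_upwards [hK_ae] with x hx
  have hfirst := hmin.inner_sub_nonneg hKconv hpK hx (hΦ p)
  have hcoef : 0 ≤ u x * (F ‖x - p‖ / ‖x - p‖) :=
    mul_nonneg (hupos x hx).le (div_nonneg (hFnn _ (norm_nonneg _)) (norm_nonneg _))
  rw [inner_neg_left, neg_nonneg] at hfirst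
  rw [radialField, inner_smul_right, inner_smul_right, ← mul_assoc]
  exact mul_nonpos_of_nonneg_of_nonpos hcoef hfirst

/-- Center-of-mass lemma (Euclidean case): there is a point p in the compact convex
set K at which the weighted moment vector field vanishes. -/
theorem center_of_mass_exists (n : ℕ) (hn : 1 ≤ n)
    (K : Set (EuclideanSpace ℝ (Fin n)))
    (hKcpt : IsCompact K) (hKconv : Convex ℝ K) (hKne : K.Nonempty)
    (hKball : Nonempty (K ≃ₜ Metric.closedBall (0 : EuclideanSpace ℝ (Fin n)) 1))
    (μ : Measure (EuclideanSpace ℝ (Fin n))) [IsFiniteMeasure μ] (hμK : μ Kᶜ = 0)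
    (hμpos : μ ≠ 0)
    (F : ℝ → ℝ) (hFc : Continuous F) (hF0 : F 0 = 0)
    (hFpos : ∀ t > (0 : ℝ), 0 < F t) (hFnn : ∀ t ≥ (0 : ℝ), 0 ≤ F t)
    (u : EuclideanSpace ℝ (Fin n) → ℝ) (hu : Continuous u)
    (hupos : ∀ x ∈ K, 0 < u x) :
    ∃ p ∈ K, ∫ x, (F ‖x - p‖ / ‖x - p‖ * u x) • (x - p) ∂μ = 0 :=
  center_of_mass_exists_general n K hKcpt hKconv hKne μ hμK F hFc hF0 hFnn u hu hupos
end
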